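/- For every n ≥ 0, the polynomial identity P_{φ^n(21)}(X) - P_{φ^n(2)}(X) = (X^{g_{n+1}+1} - X - 1) · Π_{m=0}^{n-1} (X^{|φ^m(1)|} - 1) holds, where g_n = ⌊2^{n+1}/3⌋, P_w is defined by P_{a_1⋯a_k}(X) = (-X)^k + Σ_{i=1}^k a_i(-X)^{k-i}, and φ is the morphism φ(1)=2, φ(2)=211. -/

import Mathlib

/-- The morphism φ on the alphabet {1,2}: φ(1) = 2, φ(2) = 211. -/
def phi : ℕ → List ℕ
  | 1 => [2]
  | 2 => [2, 1, 1]
  | _ => []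

/-- Extension of φ to words by concatenation. -/
def phiW (w : List ℕ) : List ℕ := w.flatMap phi

/-- The polynomial P_{a₁⋯a_k}(X) = (-X)^k + Σ_{i=1}^k a_i (-X)^{k-i}, evaluated at x. -/
def P (w : List ℕ) (x : ℝ) : ℝ :=
  (-x) ^ w.length + ∑ i ∈ Finset.range w.length, (w.getD i 0 : ℝ) * (-x) ^ (w.length - 1 - i)

/-- g_n = ⌊2^(n+1)/3⌋. -/
def g (n : ℕ) : ℕ := 2 ^ (n + 1) / 3


/-!
Write `uₙ = φⁿ(1)`, so that `φⁿ(2) = uₙ₊₁` and `uₙ₊₂ = uₙ₊₁ uₙ uₙ`. Concatenation acts on `P` by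
`P(uv) = (-X)^|v| (P(u) - 1) + P(v)`, and the lengths `|uₙ|` are the Jacobsthal numbers
`(2^(n+1) + (-1)^n) / 3`, which are odd, so `(-X)^|uₙ| = -X^|uₙ|`. Induction along `uₙ₊₂ = uₙ₊₁ uₙ uₙ`
gives `P(uₙ) = 1 - X^((n+1) mod 2) ∏_{m<n} (X^|uₘ| - 1)`, and the theorem is the instance
`φⁿ(21) = uₙ₊₁ uₙ` of the concatenation rule, with `2|uₙ| + (n mod 2) = g_{n+1} + 1`.
-/

lemma phiW_append (u v : List ℕ) : phiW (u ++ v) = phiW u ++ phiW v := by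
  simp [phiW]

lemma phiW_iterate_append (n : ℕ) (u v : List ℕ) :
    phiW^[n] (u ++ v) = phiW^[n] u ++ phiW^[n] v := by
  induction n generalizing u v with
  | zero => rfl
  | succ n ih => simp only [Function.iterate_succ_apply, phiW_append, ih]

lemma phiW_iterate_succ_one (n : ℕ) : phiW^[n + 1] [1] = phiW^[n] [2] := by
  rw [Function.iterate_succ_apply]
  rfl

lemma phiW_iterate_succ_two (n : ℕ) :
    phiW^[n + 1] [2] = phiW^[n] [2] ++ phiW^[n] [1] ++ phiW^[n] [1] := by
  rw [Function.iterate_succ_apply, ← phiW_iterate_append, ← phiW_iterate_append]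
  rfl

lemma phiW_iterate_two_one (n : ℕ) : phiW^[n] [2, 1] = phiW^[n + 1] [1] ++ phiW^[n] [1] := by
  rw [phiW_iterate_succ_one, ← phiW_iterate_append]
  rfl

lemma phiW_iterate_add_two_one (n : ℕ) :
    phiW^[n + 2] [1] = phiW^[n + 1] [1] ++ phiW^[n] [1] ++ phiW^[n] [1] := by
  rw [phiW_iterate_succ_one, phiW_iterate_succ_two, phiW_iterate_succ_one]

lemma three_mul_length_phiW_iterate_one (n : ℕ) :
    3 * (phiW^[n] [1]).length + 2 * (n % 2) = 2 ^ (n + 1) + 1 := by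
  induction n using Nat.twoStepInduction with
  | zero => rfl
  | one => rfl
  | more n ih₀ ih₁ =>
    rw [phiW_iterate_add_two_one, List.length_append, List.length_append, pow_succ, pow_succ]
    rw [pow_succ] at ih₁
    omega

lemma odd_length_phiW_iterate_one (n : ℕ) : Odd (phiW^[n] [1]).length := by
  have h := three_mul_length_phiW_iterate_one n
  rw [pow_succ] at h
  rw [Nat.odd_iff]
  omega

lemma g_succ_add_one (n : ℕ) : g (n + 1) + 1 = 2 * (phiW^[n] [1]).length + n % 2 := by
  have h := three_mul_length_phiW_iterate_one n
  rw [g, pow_succ _ (n + 1)]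
  omega

lemma length_phiW_iterate_one_succ_add_mod_two (n : ℕ) :
    (phiW^[n + 1] [1]).length + (n + 1) % 2 = 2 * (phiW^[n] [1]).length + n % 2 := by
  have h₀ := three_mul_length_phiW_iterate_one n
  have h₁ := three_mul_length_phiW_iterate_one (n + 1)
  rw [pow_succ _ (n + 1)] at h₁
  omega

lemma pow_mod_two_add_pow_succ_mod_two (x : ℝ) (n : ℕ) : x ^ (n % 2) + x ^ ((n + 1) % 2) = x + 1 := by
  rcases Nat.mod_two_eq_zero_or_one n with h | h
  · rw [h, Nat.succ_mod_two_eq_one_iff.mpr h, pow_zero, pow_one, add_comm]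
  · rw [h, Nat.succ_mod_two_eq_zero_iff.mpr h, pow_zero, pow_one]

lemma P_nil (x : ℝ) : P [] x = 1 := by
  simp [P]

lemma P_cons (a : ℕ) (w : List ℕ) (x : ℝ) :
    P (a :: w) x = P w x + (-x) ^ w.length * (-x + a - 1) := by
  simp only [P, List.length_cons, Finset.sum_range_succ', List.getD_cons_succ,
    List.getD_cons_zero, Nat.add_sub_cancel, Nat.sub_zero, Nat.sub_sub, Nat.add_comm]
  ring

lemma P_append (u v : List ℕ) (x : ℝ) :
    P (u ++ v) x = (-x) ^ v.length * (P u x - 1) + P v x := by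
  induction u with
  | nil => simp [P_nil]
  | cons a u ih =>
    rw [List.cons_append, P_cons, ih, P_cons, List.length_append, pow_add]
    ring

lemma P_phiW_iterate_one (n : ℕ) (x : ℝ) :
    P (phiW^[n] [1]) x
      = 1 - x ^ ((n + 1) % 2) * ∏ m ∈ Finset.range n, (x ^ (phiW^[m] [1]).length - 1) := by
  induction n using Nat.twoStepInduction with
  | zero => simp [P, neg_add_eq_sub]
  | one => norm_num [P, phiW, phi, neg_add_eq_sub, sub_sub_eq_add_sub, one_add_one_eq_two]
  | more n ih₀ ih₁ =>
    set y := x ^ (phiW^[n] [1]).length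
    have hneg : (-x) ^ (phiW^[n] [1]).length = -y := (odd_length_phiW_iterate_one n).neg_pow x
    have hexp : x ^ ((n + 1) % 2) * x ^ (phiW^[n + 1] [1]).length = x ^ (n % 2) * (y * y) := by
      simp only [y, ← pow_add]
      have := length_phiW_iterate_one_succ_add_mod_two n
      congr 1
      omega
    have hmod₀ : (n + 1 + 1) % 2 = n % 2 := by omega
    have hmod₁ : (n + 2 + 1) % 2 = (n + 1) % 2 := by omega
    rw [phiW_iterate_add_two_one, P_append, P_append, hneg, ih₀, ih₁, hmod₀, hmod₁,
      Finset.prod_range_succ _ (n + 1), Finset.prod_range_succ _ n]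
    linear_combination (∏ m ∈ Finset.range n, (x ^ (phiW^[m] [1]).length - 1)) * (y - 1) * hexp

theorem P_phi_twoone_sub_two (n : ℕ) (x : ℝ) :
    P (phiW^[n] [2, 1]) x - P (phiW^[n] [2]) x
      = (x ^ (g (n + 1) + 1) - x - 1) * ∏ m ∈ Finset.range n, (x ^ (phiW^[m] [1]).length - 1) := by
  set y := x ^ (phiW^[n] [1]).length
  have hneg : (-x) ^ (phiW^[n] [1]).length = -y := (odd_length_phiW_iterate_one n).neg_pow x
  have hexp : x ^ (g (n + 1) + 1) = x ^ (n % 2) * (y * y) := by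
    rw [g_succ_add_one, ← pow_add, ← pow_add, two_mul, add_comm]
  have hmod : (n + 1 + 1) % 2 = n % 2 := by omega
  rw [phiW_iterate_two_one, ← phiW_iterate_succ_one, P_append, hneg, P_phiW_iterate_one,
    P_phiW_iterate_one, Finset.prod_range_succ _ n, hmod]
  linear_combination -(∏ m ∈ Finset.range n, (x ^ (phiW^[m] [1]).length - 1))
    * (hexp + pow_mod_two_add_pow_succ_mod_two x n)
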